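/- arXiv:2603.07816 — 5 statements merged into one kernel-verified Lean document; each statement's English description precedes it below -/
import Mathlib

section
/- An infinite word w over a finite alphabet is eventually periodic if and only if there exists an integer n such that the number of distinct factors of length n of w is at most n. -/
/-!
A periodic tail with preperiod `N` and period `T` makes every factor reappear at a position
below `N + T`, so there are at most `N + T` factors of each length.

Conversely, `p_w(0) = 1`, so `p_w(n) ≤ n` forces `p_w(m + 1) ≤ p_w(m)` for some `m`. Since every
factor of length `m + 1` restricts to one of length `m`, this means each factor of length `m` has a
unique right extension. Two occurrences of the same factor of length `m` (pigeonhole) therefore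
continue identically forever, which is eventual periodicity.
-/

def factorAt {A : Type*} (w : ℕ → A) (i n : ℕ) : List A :=
  (List.range n).map fun k => w (i + k)

def factors {A : Type*} (w : ℕ → A) (n : ℕ) : Set (List A) :=
  {u | ∃ i, u = factorAt w i n}

noncomputable def complexity {A : Type*} (w : ℕ → A) (n : ℕ) : ℕ :=
  (factors w n).ncard

def EventuallyPeriodic {A : Type*} (w : ℕ → A) : Prop :=
  ∃ N T, 1 ≤ T ∧ ∀ k, N ≤ k → w (k + T) = w k

section Factors

variable {A : Type*} (w : ℕ → A)

lemma factorAt_eq_factorAt_iff {i j n : ℕ} :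
    factorAt w i n = factorAt w j n ↔ ∀ k < n, w (i + k) = w (j + k) := by
  constructor
  · intro h k hk
    simpa [factorAt, hk] using congrArg (·[k]?) h
  · intro h
    refine List.ext_getElem (by simp [factorAt]) fun k hk _ => ?_
    simp only [factorAt, List.length_map, List.length_range] at hk
    simp [factorAt, h k hk]

lemma factors_finite [Finite A] (n : ℕ) : (factors w n).Finite := by
  refine (Set.finite_range fun f : Fin n → A => List.ofFn f).subset ?_
  rintro _ ⟨i, rfl⟩
  exact ⟨fun k => w (i + k),
    List.ext_getElem (by simp [factorAt]) fun k _ _ => by simp [factorAt]⟩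

lemma take_factorAt (i m : ℕ) : (factorAt w i (m + 1)).take m = factorAt w i m := by
  simp [factorAt, ← List.map_take, List.take_range]

lemma image_take_factors_succ (m : ℕ) :
    (List.take m) '' factors w (m + 1) = factors w m := by
  ext u
  constructor
  · rintro ⟨_, ⟨i, rfl⟩, rfl⟩
    exact ⟨i, take_factorAt w i m⟩
  · rintro ⟨i, rfl⟩
    exact ⟨factorAt w i (m + 1), ⟨i, rfl⟩, take_factorAt w i m⟩

lemma complexity_zero : complexity w 0 = 1 := by
  have : factors w 0 = {[]} := by
    ext u
    simp [factors, factorAt]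
  simp [complexity, this]

lemma complexity_le_complexity_succ [Finite A] (m : ℕ) :
    complexity w m ≤ complexity w (m + 1) := by
  rw [complexity, ← image_take_factors_succ]
  exact Set.ncard_image_le (factors_finite w (m + 1))

lemma exists_complexity_succ_le_of_complexity_le {n : ℕ} (hn : complexity w n ≤ n) :
    ∃ m, complexity w (m + 1) ≤ complexity w m := by
  by_contra! hgrow
  have : ∀ k, k + 1 ≤ complexity w k := by
    intro k
    induction k with
    | zero => rw [complexity_zero]
    | succ k ih => exact ih.trans_lt (hgrow k)
  exact absurd (this n) (by omega)

end Factors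

section Periodic

variable {A : Type*} {w : ℕ → A} {N T : ℕ}

lemma factorAt_add_period (hper : ∀ k, N ≤ k → w (k + T) = w k) {i : ℕ} (hi : N ≤ i)
    (n : ℕ) :
    factorAt w (i + T) n = factorAt w i n :=
  (factorAt_eq_factorAt_iff w).2 fun k _ => by
    rw [add_right_comm, hper _ (by omega)]

lemma exists_lt_factorAt_eq (hT : 1 ≤ T) (hper : ∀ k, N ≤ k → w (k + T) = w k) (n i : ℕ) :
    ∃ j < N + T, factorAt w j n = factorAt w i n := by
  induction i using Nat.strong_induction_on with
  | _ i ih =>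
    by_cases hi : i < N + T
    · exact ⟨i, hi, rfl⟩
    · obtain ⟨j, hj, hji⟩ := ih (i - T) (by omega)
      refine ⟨j, hj, hji.trans ?_⟩
      rw [← factorAt_add_period hper (by omega), Nat.sub_add_cancel (by omega)]

lemma complexity_le_of_periodic (hT : 1 ≤ T) (hper : ∀ k, N ≤ k → w (k + T) = w k)
    (n : ℕ) : complexity w n ≤ N + T := by
  have hsub : factors w n ⊆ (fun j => factorAt w j n) '' ↑(Finset.range (N + T)) := by
    rintro _ ⟨i, rfl⟩
    obtain ⟨j, hj, hji⟩ := exists_lt_factorAt_eq hT hper n i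
    exact ⟨j, by simpa using hj, hji⟩
  calc complexity w n ≤ ((fun j => factorAt w j n) '' ↑(Finset.range (N + T))).ncard :=
        Set.ncard_le_ncard hsub ((Finset.finite_toSet _).image _)
    _ ≤ (↑(Finset.range (N + T)) : Set ℕ).ncard := Set.ncard_image_le (Finset.finite_toSet _)
    _ = N + T := by rw [Set.ncard_coe_finset, Finset.card_range]

end Periodic

section Stall

variable {A : Type*} [Finite A] {w : ℕ → A} {m : ℕ}

lemma factorAt_succ_eq_of_complexity_succ_le (hm : complexity w (m + 1) ≤ complexity w m)
    {i j : ℕ} (hij : factorAt w i m = factorAt w j m) :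
    factorAt w i (m + 1) = factorAt w j (m + 1) := by
  have hinj : Set.InjOn (List.take m) (factors w (m + 1)) := by
    refine Set.injOn_of_ncard_image_eq ?_ (factors_finite w (m + 1))
    rw [image_take_factors_succ]
    exact le_antisymm (complexity_le_complexity_succ w m) hm
  exact hinj ⟨i, rfl⟩ ⟨j, rfl⟩ (by simpa [take_factorAt] using hij)

lemma shift_eq_of_factorAt_eq (hm : complexity w (m + 1) ≤ complexity w m)
    {i j : ℕ} (hij : factorAt w i m = factorAt w j m) (d : ℕ) : w (i + d) = w (j + d) := by
  have hwin : ∀ d, factorAt w (i + d) m = factorAt w (j + d) m := by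
    intro d
    induction d with
    | zero => simpa using hij
    | succ d ih =>
      have := (factorAt_eq_factorAt_iff w).1 (factorAt_succ_eq_of_complexity_succ_le hm ih)
      refine (factorAt_eq_factorAt_iff w).2 fun k hk => ?_
      simpa only [add_assoc, add_comm 1] using this (k + 1) (by omega)
  simpa using (factorAt_eq_factorAt_iff w).1
    (factorAt_succ_eq_of_complexity_succ_le hm (hwin d)) 0 (by omega)

end Stall

lemma eventuallyPeriodic_of_shift_eq {A : Type*} {w : ℕ → A} {i j : ℕ} (hij : i < j)
    (h : ∀ d, w (i + d) = w (j + d)) : EventuallyPeriodic w := by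
  refine ⟨i, j - i, by omega, fun k hk => ?_⟩
  calc w (k + (j - i)) = w (j + (k - i)) := by congr 1; omega
    _ = w (i + (k - i)) := (h _).symm
    _ = w k := by rw [Nat.add_sub_cancel' hk]

theorem stmt0 {A : Type*} [Fintype A] (w : ℕ → A) :
    EventuallyPeriodic w ↔ ∃ n, complexity w n ≤ n := by
  constructor
  · rintro ⟨N, T, hT, hper⟩
    exact ⟨N + T, complexity_le_of_periodic hT hper _⟩
  · rintro ⟨n, hn⟩
    obtain ⟨m, hm⟩ := exists_complexity_succ_le_of_complexity_le w hn
    obtain ⟨i, j, hij, heq⟩ := Set.Finite.exists_lt_map_eq_of_forall_mem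
      (t := factors w m) (f := fun i => factorAt w i m) (fun i => ⟨i, rfl⟩) (factors_finite w m)
    exact eventuallyPeriodic_of_shift_eq hij (shift_eq_of_factorAt_eq hm heq)
end

section
/- An infinite word w is eventually periodic if and only if its complexity function is not strictly increasing, i.e., there exists m with p_w(m+1) = p_w(m); moreover in that case the complexity is eventually constant: p_w(n) = p_w(m) for all n ≥ m. -/
section Aux

variable {A : Type*} (w : ℕ → A)

lemma factorAt_eq_iff {i j n : ℕ} :
    factorAt w i n = factorAt w j n ↔ ∀ t < n, w (i + t) = w (j + t) := by
  simp [factorAt, List.map_inj_left]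

lemma factorAt_take {i m n : ℕ} (h : m ≤ n) :
    (factorAt w i n).take m = factorAt w i m := by
  unfold factorAt
  rw [← List.map_take, List.take_range, Nat.min_eq_left h]

lemma factors_take (n : ℕ) : factors w n = (List.take n) '' factors w (n + 1) := by
  ext u
  constructor
  · rintro ⟨i, rfl⟩
    exact ⟨factorAt w i (n + 1), ⟨i, rfl⟩, factorAt_take w (Nat.le_succ n)⟩
  · rintro ⟨v, ⟨i, rfl⟩, rfl⟩
    exact ⟨i, (factorAt_take w (Nat.le_succ n))⟩

lemma complexity_mono [Finite A] (n : ℕ) : complexity w n ≤ complexity w (n + 1) := by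
  rw [complexity, factors_take]
  exact Set.ncard_image_le (factors_finite w (n + 1))

lemma ext_unique [Finite A] {n : ℕ} (hp : complexity w (n + 1) = complexity w n)
    (i j : ℕ) (h : factorAt w i n = factorAt w j n) : w (i + n) = w (j + n) := by
  have hinj : Set.InjOn (List.take n) (factors w (n + 1)) := by
    apply Set.injOn_of_ncard_image_eq _ (factors_finite w (n + 1))
    rw [← factors_take]
    exact hp.symm
  have h2 : factorAt w i (n + 1) = factorAt w j (n + 1) := by
    apply hinj ⟨i, rfl⟩ ⟨j, rfl⟩
    rw [factorAt_take w (Nat.le_succ n), factorAt_take w (Nat.le_succ n), h]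
  exact (factorAt_eq_iff w).1 h2 n (Nat.lt_succ_self n)

lemma propagate [Finite A] {m : ℕ} (hp : complexity w (m + 1) = complexity w m)
    {i j : ℕ} (h : factorAt w i m = factorAt w j m) : ∀ k, w (i + k) = w (j + k) := by
  have hshift : ∀ k, factorAt w (i + k) m = factorAt w (j + k) m := by
    intro k
    induction k with
    | zero => simpa using h
    | succ k ih =>
      have hlast := ext_unique w hp _ _ ih
      rw [factorAt_eq_iff] at ih ⊢
      intro t ht
      rcases Nat.lt_or_ge (t + 1) m with h1 | h1
      · have := ih (t + 1) h1
        have e1 : i + (k + 1) + t = i + k + (t + 1) := by omega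
        have e2 : j + (k + 1) + t = j + k + (t + 1) := by omega
        rw [e1, e2]; exact this
      · have hm : t + 1 = m := by omega
        have e1 : i + (k + 1) + t = i + k + m := by omega
        have e2 : j + (k + 1) + t = j + k + m := by omega
        rw [e1, e2]; exact hlast
  intro k
  rcases Nat.lt_or_ge k m with hk | hk
  · exact (factorAt_eq_iff w).1 h k hk
  · have := ext_unique w hp _ _ (hshift (k - m))
    have e1 : i + (k - m) + m = i + k := by omega
    have e2 : j + (k - m) + m = j + k := by omega
    rw [e1, e2] at this
    exact this

lemma complexity_const [Finite A] {m : ℕ} (hp : complexity w (m + 1) = complexity w m) :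
    ∀ n, m ≤ n → complexity w n = complexity w m := by
  have step : ∀ n, m ≤ n → complexity w (n + 1) = complexity w n := by
    intro n hn
    have hinj : Set.InjOn (List.take n) (factors w (n + 1)) := by
      rintro u ⟨i, rfl⟩ v ⟨j, rfl⟩ h
      rw [factorAt_take w (Nat.le_succ n), factorAt_take w (Nat.le_succ n)] at h
      have hm : factorAt w i m = factorAt w j m := by
        have := congrArg (List.take m) h
        rwa [factorAt_take w hn, factorAt_take w hn] at this
      have hall := propagate w hp hm
      exact (factorAt_eq_iff w).2 fun t _ => hall t
    calc complexity w (n + 1) = (List.take n '' factors w (n + 1)).ncard :=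
          (Set.ncard_image_of_injOn hinj).symm
      _ = complexity w n := by rw [← factors_take]; rfl
  intro n hn
  induction n, hn using Nat.le_induction with
  | base => rfl
  | succ n hn ih => rw [step n hn, ih]

lemma complexity_le_of_ep {N T : ℕ} (hT : 1 ≤ T) (hN : ∀ k, N ≤ k → w (k + T) = w k)
    (n : ℕ) : complexity w n ≤ N + T := by
  have hsub : factors w n ⊆ (fun i => factorAt w i n) '' (Set.Iio (N + T)) := by
    rintro u ⟨i, rfl⟩
    induction i using Nat.strong_induction_on with
    | _ i ih =>
      rcases Nat.lt_or_ge i (N + T) with h | h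
      · exact ⟨i, h, rfl⟩
      · have heq : factorAt w i n = factorAt w (i - T) n := by
          rw [factorAt_eq_iff]
          intro t _
          have e : i + t = (i - T + t) + T := by omega
          rw [e]
          exact hN (i - T + t) (by omega)
        rw [heq]
        exact ih (i - T) (by omega)
  have hIio : (Set.Iio (N + T) : Set ℕ) = ↑(Finset.range (N + T)) := by
    ext x; simp
  calc complexity w n ≤ ((fun i => factorAt w i n) '' (Set.Iio (N + T))).ncard :=
        Set.ncard_le_ncard hsub ((Set.finite_Iio _).image _)
    _ ≤ (Set.Iio (N + T) : Set ℕ).ncard := Set.ncard_image_le (Set.finite_Iio _)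
    _ = N + T := by rw [hIio, Set.ncard_coe_finset, Finset.card_range]

end Aux

theorem stmt1 {A : Type*} [Fintype A] (w : ℕ → A) :
    (EventuallyPeriodic w ↔ ∃ m, complexity w (m + 1) = complexity w m) ∧
    (∀ m, complexity w (m + 1) = complexity w m →
      ∀ n, m ≤ n → complexity w n = complexity w m) := by
  refine ⟨⟨?_, ?_⟩, fun m hp => complexity_const w hp⟩
  · rintro ⟨N, T, hT, hN⟩
    by_contra hc
    push_neg at hc
    have hstrict : ∀ n, n + 1 ≤ complexity w n := by
      intro n
      induction n with
      | zero => rw [complexity_zero]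
      | succ n ih =>
        have h1 := complexity_mono w n
        have h2 := hc n
        omega
    have := hstrict (N + T)
    have := complexity_le_of_ep w hT hN (N + T)
    omega
  · rintro ⟨m, hp⟩
    obtain ⟨i, j, hne, hfe⟩ :=
      Finite.exists_ne_map_eq_of_infinite (fun i : ℕ => (fun t : Fin m => w (i + t.val)))
    have key : ∀ i j : ℕ, i < j →
        (fun t : Fin m => w (i + t.val)) = (fun t : Fin m => w (j + t.val)) →
        EventuallyPeriodic w := by
      intro i j hij hfe
      have hm : factorAt w i m = factorAt w j m := by
        rw [factorAt_eq_iff]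
        intro t ht
        exact congrFun hfe ⟨t, ht⟩
      have hall := propagate w hp hm
      refine ⟨i, j - i, by omega, fun k hk => ?_⟩
      have := (hall (k - i)).symm
      have e1 : j + (k - i) = k + (j - i) := by omega
      have e2 : i + (k - i) = k := by omega
      rw [e1, e2] at this
      exact this
    rcases Nat.lt_or_ge i j with h | h
    · exact key i j h hfe
    · exact key j i (by omega) hfe.symm
end

section
/- Let σ₁ be the substitution 1↦1, 2↦12 and σ₂ be 1↦21, 2↦2 on {1,2}. For any sequence (s_n) in {σ₁,σ₂} containing both substitutions infinitely often, the sequences of finite words (s₁∘⋯∘s_n(1))_n and (s₁∘⋯∘s_n(2))_n converge to a common infinite word. -/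
/-- Apply a substitution (letterwise) to a finite word, concatenating the images. -/
def subst (σ : Fin 2 → List (Fin 2)) (u : List (Fin 2)) : List (Fin 2) :=
  u.flatMap σ

/-- σ₁ : 1 ↦ 1, 2 ↦ 12 (letters 1, 2 encoded as 0, 1 : Fin 2). -/
def sig1 : Fin 2 → List (Fin 2) := ![[0], [0, 1]]

/-- σ₂ : 1 ↦ 21, 2 ↦ 2. -/
def sig2 : Fin 2 → List (Fin 2) := ![[1, 0], [1]]

/-- s₁ ∘ s₂ ∘ ⋯ ∘ s_n applied to the single letter `a`. -/
def iterWord (s : ℕ → Fin 2 → List (Fin 2)) (a : Fin 2) (n : ℕ) : List (Fin 2) :=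
  (List.range n).foldr (fun i acc => subst (s i) acc) [a]

/-- A sequence of finite words converges to the infinite word `w`. -/
def ConvergesTo (u : ℕ → List (Fin 2)) (w : ℕ → Fin 2) : Prop :=
  ∀ k, ∃ N, ∀ n, N ≤ n → ∀ j, j < k → (u n)[j]? = some (w j)

namespace Stmt9

def iterW (s : ℕ → Fin 2 → List (Fin 2)) (u : List (Fin 2)) (n : ℕ) : List (Fin 2) :=
  (List.range n).foldr (fun i acc => subst (s i) acc) u

lemma iterW_succ (s : ℕ → Fin 2 → List (Fin 2)) (u : List (Fin 2)) (n : ℕ) :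
    iterW s u (n+1) = iterW s (subst (s n) u) n := by
  simp [iterW, List.range_succ]

lemma subst_append (σ : Fin 2 → List (Fin 2)) (x y : List (Fin 2)) :
    subst σ (x ++ y) = subst σ x ++ subst σ y := by
  simp [subst]

lemma iterW_append (s : ℕ → Fin 2 → List (Fin 2)) :
    ∀ n x y, iterW s (x ++ y) n = iterW s x n ++ iterW s y n := by
  intro n
  induction n with
  | zero => intro x y; rfl
  | succ n ih =>
    intro x y
    rw [iterW_succ, subst_append, ih, iterW_succ, iterW_succ]

lemma iterWord_eq (s : ℕ → Fin 2 → List (Fin 2)) (a : Fin 2) (n : ℕ) :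
    iterWord s a n = iterW s [a] n := rfl

variable {s : ℕ → Fin 2 → List (Fin 2)}

lemma step1 {n : ℕ} (h : s n = sig1) :
    iterWord s 0 (n+1) = iterWord s 0 n ∧
    iterWord s 1 (n+1) = iterWord s 0 n ++ iterWord s 1 n := by
  constructor
  · rw [iterWord_eq, iterW_succ, h, show subst sig1 [0] = [0] by decide]; rfl
  · rw [iterWord_eq, iterW_succ, h, show subst sig1 [1] = [0] ++ [1] by decide,
      iterW_append]; rfl

lemma step2 {n : ℕ} (h : s n = sig2) :
    iterWord s 0 (n+1) = iterWord s 1 n ++ iterWord s 0 n ∧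
    iterWord s 1 (n+1) = iterWord s 1 n := by
  constructor
  · rw [iterWord_eq, iterW_succ, h, show subst sig2 [0] = [1] ++ [0] by decide,
      iterW_append]; rfl
  · rw [iterWord_eq, iterW_succ, h, show subst sig2 [1] = [1] by decide]; rfl

lemma len_mono (hs : ∀ n, s n = sig1 ∨ s n = sig2) (a : Fin 2) :
    Monotone fun n => (iterWord s a n).length := by
  apply monotone_nat_of_le_succ
  intro n
  rcases hs n with h | h
  · obtain ⟨e0, e1⟩ := step1 h
    rcases (by omega : a = 0 ∨ a = 1) with rfl | rfl
    · rw [e0]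
    · rw [e1]; simp
  · obtain ⟨e0, e1⟩ := step2 h
    rcases (by omega : a = 0 ∨ a = 1) with rfl | rfl
    · rw [e0]; simp
    · rw [e1]

lemma len_pos (a : Fin 2) (n : ℕ) (hs : ∀ n, s n = sig1 ∨ s n = sig2) :
    1 ≤ (iterWord s a n).length := by
  have h0 : (iterWord s a 0).length = 1 := by simp [iterWord]
  calc 1 = (iterWord s a 0).length := h0.symm
    _ ≤ (iterWord s a n).length := len_mono hs a (Nat.zero_le n)

lemma unbounded0 (hs : ∀ n, s n = sig1 ∨ s n = sig2)
    (h2 : ∀ N, ∃ n, N ≤ n ∧ s n = sig2) (k : ℕ) :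
    ∃ N, k ≤ (iterWord s 0 N).length := by
  induction k with
  | zero => exact ⟨0, Nat.zero_le _⟩
  | succ k ih =>
    obtain ⟨N, hN⟩ := ih
    obtain ⟨n, hn, hσ⟩ := h2 N
    refine ⟨n+1, ?_⟩
    rw [(step2 hσ).1, List.length_append]
    have hm : (iterWord s 0 N).length ≤ (iterWord s 0 n).length := len_mono hs 0 hn
    have hp := len_pos (s := s) 1 n hs
    omega

lemma persist (hs : ∀ n, s n = sig1 ∨ s n = sig2) {p : List (Fin 2)} {n m : ℕ}
    (hnm : n ≤ m) (h : p <+: iterWord s 0 n ∧ p <+: iterWord s 1 n) :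
    p <+: iterWord s 0 m ∧ p <+: iterWord s 1 m := by
  induction m, hnm using Nat.le_induction with
  | base => exact h
  | succ m hm ih =>
    rcases hs m with hσ | hσ
    · obtain ⟨e0, e1⟩ := step1 hσ
      rw [e0, e1]
      exact ⟨ih.1, ih.1.trans (List.prefix_append _ _)⟩
    · obtain ⟨e0, e1⟩ := step2 hσ
      rw [e0, e1]
      exact ⟨ih.2.trans (List.prefix_append _ _), ih.2⟩

lemma common (hs : ∀ n, s n = sig1 ∨ s n = sig2)
    (h1 : ∀ N, ∃ n, N ≤ n ∧ s n = sig1)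
    (h2 : ∀ N, ∃ n, N ≤ n ∧ s n = sig2) (k : ℕ) :
    ∃ M p, k ≤ List.length p ∧
      ∀ n, M ≤ n → p <+: iterWord s 0 n ∧ p <+: iterWord s 1 n := by
  obtain ⟨N, hN⟩ := unbounded0 hs h2 k
  obtain ⟨n, hn, hσ⟩ := h1 N
  obtain ⟨e0, e1⟩ := step1 hσ
  refine ⟨n+1, iterWord s 0 n, hN.trans (len_mono hs 0 hn), ?_⟩
  intro m hm
  apply persist hs hm
  rw [e0, e1]
  exact ⟨List.prefix_refl _, List.prefix_append _ _⟩

lemma getElem?_of_prefix {p l : List (Fin 2)} (h : p <+: l) {j : ℕ}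
    (hj : j < p.length) : l[j]? = p[j]? := by
  obtain ⟨t, rfl⟩ := h
  rw [List.getElem?_append_left hj]

end Stmt9

theorem stmt9 (s : ℕ → Fin 2 → List (Fin 2))
    (hs : ∀ n, s n = sig1 ∨ s n = sig2)
    (h1 : ∀ N, ∃ n, N ≤ n ∧ s n = sig1)
    (h2 : ∀ N, ∃ n, N ≤ n ∧ s n = sig2) :
    ∃ w : ℕ → Fin 2,
      ConvergesTo (iterWord s 0) w ∧ ConvergesTo (iterWord s 1) w := by
  have hc := Stmt9.common hs h1 h2
  choose M p hlen hpre using hc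
  refine ⟨fun j => (p (j+1)).getD j 0, ?_, ?_⟩ <;>
  · intro k
    refine ⟨M k, fun n hn j hj => ?_⟩
    have hjk : j < (p k).length := lt_of_lt_of_le hj (hlen k)
    have hjj : j < (p (j+1)).length := lt_of_lt_of_le (Nat.lt_succ_self j) (hlen (j+1))
    have hagree : (p k)[j]? = some ((p (j+1)).getD j 0) := by
      set m := max (M k) (M (j+1)) with hm
      have hk := (hpre k m (le_max_left _ _)).1
      have hj1 := (hpre (j+1) m (le_max_right _ _)).1
      rw [← Stmt9.getElem?_of_prefix hk hjk, Stmt9.getElem?_of_prefix hj1 hjj,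
        List.getElem?_eq_getElem hjj, List.getD_eq_getElem _ _ hjj]
    first
    | rw [Stmt9.getElem?_of_prefix ((hpre k n hn).1) hjk, hagree]
    | rw [Stmt9.getElem?_of_prefix ((hpre k n hn).2) hjk, hagree]
end

section
/- The limit of the sequence of finite words defined by v₀ = 2, v₁ = 1, v_{n+2} = v_{n+1} · v_n (concatenation) equals the Fibonacci word, i.e., the limit of (σ₁∘σ₂)^n applied to the letter 1, where σ₁: 1↦1, 2↦12 and σ₂: 1↦21, 2↦2. -/
/-- v₀ = 2, v₁ = 1, v_{n+2} = v_{n+1} · v_n. -/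
def fibv : ℕ → List (Fin 2)
  | 0 => [1]
  | 1 => [0]
  | n + 2 => fibv (n + 1) ++ fibv n

/-- (σ₁ ∘ σ₂)^n applied to the letter 1. -/
def fibIter (n : ℕ) : List (Fin 2) :=
  (fun u => subst sig1 (subst sig2 u))^[n] [0]

lemma subst_append (σ : Fin 2 → List (Fin 2)) (u v : List (Fin 2)) :
    subst σ (u ++ v) = subst σ u ++ subst σ v := by
  simp [subst]

lemma tau_fibv : ∀ n, subst sig1 (subst sig2 (fibv n)) = fibv (n + 2)
  | 0 => rfl
  | 1 => rfl
  | n + 2 => by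
    show subst sig1 (subst sig2 (fibv (n + 1) ++ fibv n)) = fibv (n + 4)
    rw [subst_append, subst_append, tau_fibv (n + 1), tau_fibv n]
    rfl

lemma fibIter_eq (n : ℕ) : fibIter n = fibv (2 * n + 1) := by
  induction n with
  | zero => rfl
  | succ n ih =>
    have : fibIter (n + 1) = subst sig1 (subst sig2 (fibIter n)) := by
      simp [fibIter, Function.iterate_succ_apply']
    rw [this, ih, tau_fibv]
    ring_nf

lemma fibv_len_pos : ∀ n, 1 ≤ (fibv n).length
  | 0 => by simp [fibv]
  | 1 => by simp [fibv]
  | n + 2 => by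
    rw [fibv, List.length_append]
    have := fibv_len_pos n
    omega

lemma fibv_len_ge : ∀ n, n ≤ (fibv n).length
  | 0 => by simp [fibv]
  | 1 => by simp [fibv]
  | n + 2 => by
    rw [fibv, List.length_append]
    have h1 := fibv_len_ge (n + 1)
    have h2 := fibv_len_pos n
    omega

lemma fibv_prefix : ∀ n m, 1 ≤ m → m ≤ n → fibv m <+: fibv n := by
  intro n
  induction n with
  | zero => intro m h1 h2; omega
  | succ n ih =>
    intro m h1 h2
    rcases eq_or_lt_of_le h2 with h | h
    · exact h ▸ List.prefix_refl _
    · have hm : m ≤ n := by omega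
      have h1n : 1 ≤ n := le_trans h1 hm
      refine (ih m h1 hm).trans ?_
      obtain ⟨k, rfl⟩ : ∃ k, n = k + 1 := ⟨n - 1, by omega⟩
      show fibv (k + 1) <+: fibv (k + 2)
      rw [fibv]
      exact List.prefix_append _ _

lemma prefix_getElem? {u v : List (Fin 2)} (h : u <+: v) {j : ℕ} (hj : j < u.length) :
    v[j]? = u[j]? := by
  obtain ⟨t, rfl⟩ := h
  rw [List.getElem?_append, if_pos hj]

theorem stmt10 :
    ∃ w : ℕ → Fin 2, ConvergesTo fibv w ∧ ConvergesTo fibIter w := by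
  refine ⟨fun j => (fibv (j + 1)).getD j 0, ?_, ?_⟩
  · intro k
    refine ⟨k + 1, fun n hn j hj => ?_⟩
    have hlen : j < (fibv (j + 1)).length := lt_of_lt_of_le (by omega) (fibv_len_ge (j + 1))
    have hp : fibv (j + 1) <+: fibv n := fibv_prefix n (j + 1) (by omega) (by omega)
    rw [prefix_getElem? hp hlen, List.getElem?_eq_getElem hlen]
    simp [List.getD, List.getElem?_eq_getElem hlen]
  · intro k
    refine ⟨k, fun n hn j hj => ?_⟩
    rw [fibIter_eq]
    have hlen : j < (fibv (j + 1)).length := lt_of_lt_of_le (by omega) (fibv_len_ge (j + 1))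
    have hp : fibv (j + 1) <+: fibv (2 * n + 1) := fibv_prefix _ (j + 1) (by omega) (by omega)
    rw [prefix_getElem? hp hlen, List.getElem?_eq_getElem hlen]
    simp [List.getD, List.getElem?_eq_getElem hlen]
end

section
/- Let w be an infinite word over {1,…,d} with complexity p_w(n) = (d−1)n + 1 for all n ≥ 1 and rationally independent letter frequencies. Then w is recurrent: every factor of w occurs infinitely often. -/
/-- Number of occurrences of the letter `a` among the first `n` letters of `w`. -/
def prefCount {d : ℕ} (w : ℕ → Fin d) (n : ℕ) (a : Fin d) : ℕ :=
  ((Finset.range n).filter fun i => w i = a).card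

/-!
If a factor `u` of length `n` never occurs after position `N`, the suffix `w (· + N)` has the
same letter frequencies but at most `(d - 1) n` factors of length `n`, against Tijdeman's bound
`p(n) ≥ (d - 1) n + 1` for words with rationally independent frequencies.

For Tijdeman's bound, suppose `p(m + 1) - p(m) ≤ d - 2` and look at the Rauzy graph of order `m`:
vertices are the factors of length `m`, edges the factors of length `m + 1`, labelled by their
last letter. The word is a walk visiting every vertex, and a limit point `x` of its edge
frequencies is a flow whose label sums are the letter frequencies. Rank–nullity, together with
connectivity of the graph, yields a nonzero rational `q` on letters and a potential `z` on
vertices with `q (label e) = z (source e) - z (target e)`; pairing with the flow gives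
`∑ a, q a * f a = 0`.
-/

open Filter Finset Topology

section Window

variable {α : Type*}

def window (v : ℕ → α) (n i : ℕ) : Fin n → α := fun k => v (i + k)

lemma factorAt_eq_ofFn_window (v : ℕ → α) (i n : ℕ) :
    factorAt v i n = List.ofFn (window v n i) := by
  apply List.ext_getElem <;> simp [factorAt, window]

lemma factors_eq_image_window (v : ℕ → α) (n : ℕ) :
    factors v n = List.ofFn '' Set.range (window v n) := by
  ext u
  simp [factors, factorAt_eq_ofFn_window, eq_comm]

lemma complexity_eq_ncard_range_window (v : ℕ → α) (n : ℕ) :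
    complexity v n = (Set.range (window v n)).ncard := by
  rw [complexity, factors_eq_image_window, Set.ncard_image_of_injective _ List.ofFn_injective]

lemma factors_finite_s18 [Finite α] (v : ℕ → α) (n : ℕ) : (factors v n).Finite := by
  rw [factors_eq_image_window]
  exact (Set.toFinite _).image _

lemma init_window (v : ℕ → α) (n i : ℕ) : Fin.init (window v (n + 1) i) = window v n i := rfl

lemma tail_window (v : ℕ → α) (n i : ℕ) : Fin.tail (window v (n + 1) i) = window v n (i + 1) := by
  funext k
  simp only [Fin.tail, window, Fin.val_succ]
  congr 1
  omega

lemma factorAt_comp_add (v : ℕ → α) (N i n : ℕ) :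
    factorAt (fun j => v (j + N)) i n = factorAt v (i + N) n := by
  simp only [factorAt, add_right_comm]

end Window

section Frequency

lemma abs_count_shift_sub_count_le (p : ℕ → Prop) [DecidablePred p] (N n : ℕ) :
    |(Nat.count (fun i => p (i + N)) n : ℝ) - Nat.count p n| ≤ N := by
  have h₁ := Nat.count_add' p n N
  have h₂ := Nat.count_add p n N
  have h₃ := Nat.count_le p (n := N)
  have h₄ := Nat.count_le (fun k => p (n + k)) (n := N)
  rw [abs_sub_le_iff, sub_le_iff_le_add, sub_le_iff_le_add]
  constructor <;> norm_cast <;> omega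

lemma tendsto_div_of_abs_sub_le {ι : Type*} {l : Filter ι} {a b t : ι → ℝ} {C L : ℝ}
    (ha : Tendsto (fun i => a i / t i) l (𝓝 L)) (ht : Tendsto t l atTop)
    (hab : ∀ i, |a i - b i| ≤ C) : Tendsto (fun i => b i / t i) l (𝓝 L) := by
  have h₀ : Tendsto (fun i => (a i - b i) / t i) l (𝓝 0) := by
    refine squeeze_zero_norm' ?_ ((tendsto_const_nhds (x := C)).div_atTop ht)
    filter_upwards [ht.eventually_gt_atTop 0] with i hi
    rw [norm_div, Real.norm_of_nonneg hi.le]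
    exact div_le_div_of_nonneg_right (hab i) hi.le
  simpa [← sub_div] using ha.sub h₀

lemma tendsto_count_shift_div {p : ℕ → Prop} [DecidablePred p] {L : ℝ}
    (h : Tendsto (fun n => (Nat.count p n : ℝ) / n) atTop (𝓝 L)) (N : ℕ) :
    Tendsto (fun n => (Nat.count (fun i => p (i + N)) n : ℝ) / n) atTop (𝓝 L) :=
  tendsto_div_of_abs_sub_le h tendsto_natCast_atTop_atTop fun n => by
    rw [abs_sub_comm]; exact abs_count_shift_sub_count_le p N n

lemma exists_strictMono_tendsto_count_div {β : Type*} [Countable β] [DecidableEq β] (g : ℕ → β) :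
    ∃ (x : β → ℝ) (φ : ℕ → ℕ), StrictMono φ ∧
      ∀ e, Tendsto (fun k => (Nat.count (fun i => g i = e) (φ k) : ℝ) / φ k) atTop (𝓝 (x e)) := by
  have hmem : ∀ n, (fun e => (Nat.count (fun i => g i = e) n : ℝ) / n) ∈
      Set.univ.pi fun _ => Set.Icc 0 1 := fun n e _ =>
    ⟨by positivity, div_le_one_of_le₀ (by exact_mod_cast Nat.count_le _) n.cast_nonneg⟩
  obtain ⟨x, -, φ, hφ, hlim⟩ := (isCompact_univ_pi fun _ => isCompact_Icc).tendsto_subseq hmem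
  exact ⟨x, φ, hφ, tendsto_pi_nhds.1 hlim⟩

lemma count_comp_eq_sum {β γ : Type*} [Fintype β] [DecidableEq β] [DecidableEq γ]
    (g : ℕ → β) (h : β → γ) (c : γ) (n : ℕ) :
    Nat.count (fun i => h (g i) = c) n = ∑ e with h e = c, Nat.count (fun i => g i = e) n := by
  induction n with
  | zero => simp
  | succ n ih => simp [Nat.count_succ, ih, sum_add_distrib, sum_ite_eq]

lemma tendsto_count_comp_div {β γ ι : Type*} [Fintype β] [DecidableEq β] [DecidableEq γ]
    {l : Filter ι} {g : ℕ → β} {φ : ι → ℕ} {x : β → ℝ}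
    (hx : ∀ e, Tendsto (fun k => (Nat.count (fun i => g i = e) (φ k) : ℝ) / φ k) l (𝓝 (x e)))
    (h : β → γ) (c : γ) :
    Tendsto (fun k => (Nat.count (fun i => h (g i) = c) (φ k) : ℝ) / φ k) l
      (𝓝 (∑ e with h e = c, x e)) := by
  simp_rw [count_comp_eq_sum, Nat.cast_sum, sum_div]
  exact tendsto_finsetSum _ fun e _ => hx e

end Frequency

section Flow

lemma sum_apply_mul_eq_sum_mul_sum_fiber {E κ : Type*} [Fintype E] [Fintype κ] [DecidableEq κ]
    (h : E → κ) (g : κ → ℝ) (x : E → ℝ) :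
    ∑ e, g (h e) * x e = ∑ k, g k * ∑ e with h e = k, x e := by
  simp_rw [mul_sum]
  rw [← sum_fiberwise univ h]
  exact sum_congr rfl fun k _ => sum_congr rfl fun e he => by rw [(mem_filter.1 he).2]

variable {V E ι : Type*} [Fintype V] [Fintype E] [Fintype ι] (s t : E → V) (ℓ : E → ι)

lemma exists_label_eq_potential_sub [Nonempty V]
    (hconn : ∀ z : V → ℚ, (∀ e, z (s e) = z (t e)) → ∀ u u', z u = z u')
    (hcard : Fintype.card E + 2 ≤ Fintype.card V + Fintype.card ι) :
    ∃ q : ι → ℚ, q ≠ 0 ∧ ∃ z : V → ℚ, ∀ e, q (ℓ e) = z (s e) - z (t e) := by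
  let Φ : (ι → ℚ) × (V → ℚ) →ₗ[ℚ] E → ℚ :=
    LinearMap.coprod (LinearMap.funLeft ℚ ℚ ℓ) (LinearMap.funLeft ℚ ℚ t - LinearMap.funLeft ℚ ℚ s)
  have hΦ : ∀ p, Φ p = 0 ↔ ∀ e, p.1 (ℓ e) = p.2 (s e) - p.2 (t e) := fun p => by
    simp only [Φ, LinearMap.coprod_apply, funext_iff, Pi.add_apply, LinearMap.sub_apply,
      LinearMap.funLeft_apply, Pi.sub_apply, Pi.zero_apply]
    refine forall_congr' fun e => ?_
    constructor <;> intro h <;> linarith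
  have hdim : 2 ≤ Module.finrank ℚ (LinearMap.ker Φ) := by
    have := Φ.finrank_range_add_finrank_ker
    have := (LinearMap.range Φ).finrank_le
    simp only [Module.finrank_prod, Module.finrank_fintype_fun_eq_card] at *
    omega
  by_contra h
  obtain ⟨u₀⟩ := ‹Nonempty V›
  let ψ : LinearMap.ker Φ →ₗ[ℚ] ℚ :=
    (LinearMap.proj u₀ ∘ₗ LinearMap.snd ℚ _ _) ∘ₗ (LinearMap.ker Φ).subtype
  have hψ : Function.Injective ψ := by
    rw [← LinearMap.ker_eq_bot, Submodule.eq_bot_iff]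
    rintro ⟨⟨q, z⟩, hp⟩ hψp
    have hz := (hΦ _).1 hp
    have hq : q = 0 := by_contra fun hq => h ⟨q, hq, z, hz⟩
    have hz₀ : z = 0 := funext fun u =>
      (hconn z (fun e => sub_eq_zero.1 (by simpa [hq] using (hz e).symm)) u u₀).trans hψp
    simp [hq, hz₀]
  have := LinearMap.finrank_le_finrank_of_injective hψ
  rw [Module.finrank_self] at this
  omega

theorem not_linearIndependent_of_flow [DecidableEq V] [DecidableEq ι] [Nonempty V] (x : E → ℝ)
    (hflow : ∀ u, ∑ e with s e = u, x e = ∑ e with t e = u, x e)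
    (hconn : ∀ z : V → ℚ, (∀ e, z (s e) = z (t e)) → ∀ u u', z u = z u')
    (hcard : Fintype.card E + 2 ≤ Fintype.card V + Fintype.card ι) :
    ¬ LinearIndependent ℚ fun a => ∑ e with ℓ e = a, x e := by
  obtain ⟨q, hq, z, hqz⟩ := exists_label_eq_potential_sub s t ℓ hconn hcard
  have hrel : ∑ a, q a • ∑ e with ℓ e = a, x e = 0 := calc
    ∑ a, q a • ∑ e with ℓ e = a, x e = ∑ e, (q (ℓ e) : ℝ) * x e := by
      simp only [Rat.smul_def, sum_apply_mul_eq_sum_mul_sum_fiber ℓ (fun a => (q a : ℝ))]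
    _ = ∑ e, (z (s e) : ℝ) * x e - ∑ e, (z (t e) : ℝ) * x e := by
      simp [hqz, sub_mul]
    _ = 0 := by
      rw [sum_apply_mul_eq_sum_mul_sum_fiber s (fun u => (z u : ℝ)),
        sum_apply_mul_eq_sum_mul_sum_fiber t (fun u => (z u : ℝ))]
      simp only [hflow, sub_self]
  rw [Fintype.linearIndependent_iff]
  exact fun h => hq (funext (h q hrel))

theorem not_linearIndependent_of_walk [DecidableEq V] [DecidableEq E] [DecidableEq ι]
    (g : ℕ → E) (hwalk : ∀ i, t (g i) = s (g (i + 1))) (hsurj : Function.Surjective (s ∘ g))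
    (hcard : Fintype.card E + 2 ≤ Fintype.card V + Fintype.card ι) (f : ι → ℝ)
    (hf : ∀ a, Tendsto (fun n => (Nat.count (fun i => ℓ (g i) = a) n : ℝ) / n) atTop (𝓝 (f a))) :
    ¬ LinearIndependent ℚ f := by
  obtain ⟨x, φ, hφ, hx⟩ := exists_strictMono_tendsto_count_div g
  have hlabel : f = fun a => ∑ e with ℓ e = a, x e := funext fun a =>
    tendsto_nhds_unique ((hf a).comp hφ.tendsto_atTop) (tendsto_count_comp_div hx ℓ a)
  have hflow : ∀ u, ∑ e with s e = u, x e = ∑ e with t e = u, x e := fun u => by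
    refine tendsto_nhds_unique (tendsto_count_comp_div hx s u) ?_
    refine tendsto_div_of_abs_sub_le (C := 1) (tendsto_count_comp_div hx t u)
      (tendsto_natCast_atTop_atTop.comp hφ.tendsto_atTop) fun k => ?_
    simpa [hwalk] using abs_count_shift_sub_count_le (fun i => s (g i) = u) 1 (φ k)
  have hconn : ∀ z : V → ℚ, (∀ e, z (s e) = z (t e)) → ∀ u u', z u = z u' := by
    intro z hz
    have hconst : ∀ i, z (s (g i)) = z (s (g 0)) := fun i => by
      induction i with
      | zero => rfl
      | succ i ih => rw [← hwalk, ← hz, ih]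
    intro u u'
    obtain ⟨i, rfl⟩ := hsurj u
    obtain ⟨j, rfl⟩ := hsurj u'
    exact (hconst i).trans (hconst j).symm
  have : Nonempty V := ⟨s (g 0)⟩
  rw [hlabel]
  exact not_linearIndependent_of_flow s t ℓ x hflow hconn hcard

end Flow

section Tijdeman

variable {α : Type*} [Fintype α] [DecidableEq α]

theorem complexity_add_card_le (v : ℕ → α) {f : α → ℝ}
    (hf : ∀ a, Tendsto (fun n => (Nat.count (fun i => v i = a) n : ℝ) / n) atTop (𝓝 (f a)))
    (hind : LinearIndependent ℚ f) (m : ℕ) :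
    complexity v m + Fintype.card α ≤ complexity v (m + 1) + 1 := by
  classical
  let V := Set.range (window v m)
  let E := Set.range (window v (m + 1))
  have : Fintype V := Fintype.ofFinite V
  have : Fintype E := Fintype.ofFinite E
  let s : E → V := Set.MapsTo.restrict Fin.init E V
    (Set.mapsTo_range_iff.2 fun i => ⟨i, (init_window v m i).symm⟩)
  let t : E → V := Set.MapsTo.restrict Fin.tail E V
    (Set.mapsTo_range_iff.2 fun i => ⟨i + 1, (tail_window v m i).symm⟩)
  let ℓ : E → α := fun e => e.1 (Fin.last m)
  let g : ℕ → E := fun i => ⟨window v (m + 1) i, i, rfl⟩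
  by_contra hlt
  refine not_linearIndependent_of_walk s t ℓ g (fun i => ?_) (fun u => ?_) ?_ f (fun a => ?_) hind
  · exact Subtype.ext (tail_window v m i)
  · obtain ⟨i, hi⟩ := u.2
    exact ⟨i, Subtype.ext hi⟩
  · simp only [Fintype.card_eq_nat_card, Nat.card_coe_set_eq, V, E,
      ← complexity_eq_ncard_range_window] at hlt ⊢
    omega
  · -- `ℓ (g i)` is `v (i + m)` by definition
    exact tendsto_count_shift_div (hf a) m

theorem le_complexity_of_linearIndependent (v : ℕ → α) {f : α → ℝ}
    (hf : ∀ a, Tendsto (fun n => (Nat.count (fun i => v i = a) n : ℝ) / n) atTop (𝓝 (f a)))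
    (hind : LinearIndependent ℚ f) (n : ℕ) :
    (Fintype.card α - 1) * n + 1 ≤ complexity v n := by
  induction n with
  | zero =>
    rw [mul_zero, zero_add, complexity_eq_ncard_range_window]
    exact (Set.ncard_pos (Set.toFinite _)).2 (Set.range_nonempty _)
  | succ m ih =>
    have hstep := complexity_add_card_le v hf hind m
    have hα : 0 < Fintype.card α := Fintype.card_pos_iff.2 ⟨v 0⟩
    rw [Nat.mul_succ]
    omega

end Tijdeman

theorem stmt18_general (d : ℕ) (w : ℕ → Fin d)
    (hp : ∀ n, 1 ≤ n → complexity w n = (d - 1) * n + 1)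
    (f : Fin d → ℝ)
    (hf : ∀ a, Filter.Tendsto (fun n => (prefCount w n a : ℝ) / n)
      Filter.atTop (nhds (f a)))
    (hind : LinearIndependent ℚ f) :
    ∀ n, ∀ u ∈ factors w n, {i : ℕ | factorAt w i n = u}.Infinite := by
  intro n u hu
  rcases Nat.eq_zero_or_pos n with rfl | hn
  · obtain ⟨i, rfl⟩ := hu
    simpa [factorAt] using Set.infinite_univ
  by_contra hfin
  obtain ⟨N, hN⟩ := (Set.not_infinite.1 hfin).bddAbove
  have hsub : factors (fun i => w (i + (N + 1))) n ⊆ factors w n \ {u} := by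
    rintro _ ⟨i, rfl⟩
    refine ⟨⟨i + (N + 1), factorAt_comp_add w _ i n⟩, fun h => ?_⟩
    rw [Set.mem_singleton_iff, factorAt_comp_add] at h
    have := hN h
    omega
  have hfreq : ∀ a, Tendsto (fun n => (Nat.count (fun i => w i = a) n : ℝ) / n) atTop (𝓝 (f a)) :=
    by simpa only [Nat.count_eq_card_filter_range, prefCount] using hf
  have hlow := le_complexity_of_linearIndependent _
    (fun a => tendsto_count_shift_div (hfreq a) (N + 1)) hind n
  have hup := Set.ncard_le_ncard hsub ((factors_finite_s18 w n).sdiff)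
  rw [Set.ncard_sdiff_singleton_of_mem hu] at hup
  have hpn := hp n hn
  rw [complexity, Fintype.card_fin] at hlow
  rw [complexity] at hpn
  omega

theorem stmt18 (d : ℕ) (w : ℕ → Fin d) (hall : complexity w 1 = d)
    (hp : ∀ n, 1 ≤ n → complexity w n = (d - 1) * n + 1)
    (f : Fin d → ℝ)
    (hf : ∀ a, Filter.Tendsto (fun n => (prefCount w n a : ℝ) / n)
      Filter.atTop (nhds (f a)))
    (hind : LinearIndependent ℚ f) :
    ∀ n, ∀ u ∈ factors w n, {i : ℕ | factorAt w i n = u}.Infinite :=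
  stmt18_general d w hp f hf hind
end
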